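/- arXiv:2303.11464 — 2 statements merged into one kernel-verified Lean document; each statement's English description precedes it below -/
import Mathlib

section
/- Let M be an n×n real matrix partitioned into an ℓ×ℓ array of blocks, δ ∈ ℕ^{ℓ×ℓ} a delay matrix with zero diagonal, and suppose max_{i,j} δ_{ij} ≤ κ ≤ κ'. Then every nonzero eigenvalue of the delayed iteration operator M^{(δ,κ)} is an eigenvalue of M^{(δ,κ')}, and conversely; in particular ρ(M^{(δ,κ)}) = ρ(M^{(δ,κ')}) provided ρ(M^{(δ,κ)}) > 0. -/
/-!
For `μ ≠ 0` the shift rows of the delayed operator force every `μ`-eigenvector to be a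
geometric history `x^(κ - s) = μ⁻ˢ x^(κ)`. Substituting this into the first block row shows that
`μ` is an eigenvalue of `M^(δ,κ)` exactly when it is an eigenvalue of the matrix
`(M_ij μ^(-δ_ji))_ij`, which does not involve `κ`. The eigenvalue `0` does not affect the spectral
radius, because the spectral radius is a supremum of nonnegative numbers.
-/

open Matrix

/-- Spectral radius of a complex matrix: sup of moduli of its spectrum. -/
noncomputable def specRad {m : Type*} [Fintype m] [DecidableEq m] (A : Matrix m m ℂ) : ℝ :=
  sSup ((fun z : ℂ => ‖z‖) '' spectrum ℂ A)

/-- Delayed iteration operator `M^(δ,κ)` on the history space `ℝ^((κ+1)n)` (complexified).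
The partition of `M` into `ℓ × ℓ` blocks is encoded by `p : Fin n → Fin ℓ` assigning each
row/column index to its block.  The history vector `v` stores `v (s, ·) = x^(κ - s)`,
and the operator maps `(x^(κ), …, x^(0))` to `(x^(κ+1), …, x^(1))` where
`x^(κ+1)_i = ∑_j M_{ij} x^(κ - δ_{ji})_j`. -/
noncomputable def delayedOp (n ℓ κ : ℕ) (M : Matrix (Fin n) (Fin n) ℝ)
    (p : Fin n → Fin ℓ) (δ : Fin ℓ → Fin ℓ → ℕ) :
    Matrix (Fin (κ + 1) × Fin n) (Fin (κ + 1) × Fin n) ℂ :=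
  fun st tb =>
    if st.1.val = 0 then
      (if tb.1.val = δ (p tb.2) (p st.2) then (M st.2 tb.2 : ℂ) else 0)
    else
      (if tb.1.val + 1 = st.1.val ∧ st.2 = tb.2 then 1 else 0)

theorem Matrix.mem_spectrum_iff_exists_mulVec_eq_smul {K m : Type*} [Field K] [Fintype m]
    [DecidableEq m] (A : Matrix m m K) (μ : K) :
    μ ∈ spectrum K A ↔ ∃ v ≠ 0, A *ᵥ v = μ • v := by
  rw [← Matrix.spectrum_toLin', ← Module.End.hasEigenvalue_iff_mem_spectrum,
    Module.End.hasEigenvalue_iff, Submodule.ne_bot_iff]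
  simp only [Module.End.mem_eigenspace_iff, Matrix.toLin'_apply, and_comm]

theorem specRad_le_of_forall_ne_zero_mem {m m' : Type*} [Fintype m] [DecidableEq m]
    [Fintype m'] [DecidableEq m'] {A : Matrix m m ℂ} {B : Matrix m' m' ℂ}
    (h : ∀ μ ≠ 0, μ ∈ spectrum ℂ A → μ ∈ spectrum ℂ B) : specRad A ≤ specRad B := by
  have hB : BddAbove ((fun z : ℂ => ‖z‖) '' spectrum ℂ B) :=
    ((Matrix.finite_spectrum B).image _).bddAbove
  have hB0 : 0 ≤ specRad B := Real.sSup_nonneg (by rintro _ ⟨z, -, rfl⟩; positivity)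
  refine Real.sSup_le ?_ hB0
  rintro _ ⟨μ, hμ, rfl⟩
  rcases eq_or_ne μ 0 with rfl | hμ0
  · simpa using hB0
  · exact le_csSup hB ⟨μ, h μ hμ0 hμ, rfl⟩

theorem specRad_eq_of_forall_ne_zero_mem_iff {m m' : Type*} [Fintype m] [DecidableEq m]
    [Fintype m'] [DecidableEq m'] {A : Matrix m m ℂ} {B : Matrix m' m' ℂ}
    (h : ∀ μ ≠ 0, (μ ∈ spectrum ℂ A ↔ μ ∈ spectrum ℂ B)) : specRad A = specRad B :=
  le_antisymm (specRad_le_of_forall_ne_zero_mem fun μ hμ => (h μ hμ).1)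
    (specRad_le_of_forall_ne_zero_mem fun μ hμ => (h μ hμ).2)

section

variable {n ℓ κ : ℕ} {M : Matrix (Fin n) (Fin n) ℝ} {p : Fin n → Fin ℓ} {δ : Fin ℓ → Fin ℓ → ℕ}

theorem delayedOp_mulVec_zero (hκ : ∀ i j, δ i j ≤ κ) (v : Fin (κ + 1) × Fin n → ℂ) (i : Fin n) :
    (delayedOp n ℓ κ M p δ *ᵥ v) (0, i) =
      ∑ j, (M i j : ℂ) * v (⟨δ (p j) (p i), Nat.lt_succ_of_le (hκ _ _)⟩, j) := by
  simp only [mulVec, dotProduct, delayedOp, Fin.val_zero, if_true, Fintype.sum_prod_type]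
  rw [Finset.sum_comm]
  refine Finset.sum_congr rfl fun j _ => ?_
  rw [Finset.sum_eq_single ⟨δ (p j) (p i), Nat.lt_succ_of_le (hκ _ _)⟩]
  · simp
  · intro t _ ht
    rw [if_neg (fun h => ht (Fin.ext h)), zero_mul]
  · simp

theorem delayedOp_mulVec_succ (v : Fin (κ + 1) × Fin n → ℂ) (t : Fin κ) (i : Fin n) :
    (delayedOp n ℓ κ M p δ *ᵥ v) (t.succ, i) = v (t.castSucc, i) := by
  simp only [mulVec, dotProduct, delayedOp, Fin.val_succ, Nat.succ_ne_zero, if_false]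
  rw [Finset.sum_eq_single (t.castSucc, i)]
  · simp
  · rintro ⟨s, j⟩ _ hsj
    rw [if_neg, zero_mul]
    rintro ⟨hs, rfl⟩
    exact hsj (Prod.ext (Fin.ext (by rw [Fin.val_castSucc]; omega)) rfl)
  · simp

noncomputable def delayWeighted (M : Matrix (Fin n) (Fin n) ℝ) (p : Fin n → Fin ℓ)
    (δ : Fin ℓ → Fin ℓ → ℕ) (μ : ℂ) : Matrix (Fin n) (Fin n) ℂ :=
  fun i j => M i j * μ⁻¹ ^ δ (p j) (p i)

noncomputable def geometricHistory (κ : ℕ) (μ : ℂ) (u : Fin n → ℂ) : Fin (κ + 1) × Fin n → ℂ :=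
  fun si => μ⁻¹ ^ (si.1 : ℕ) * u si.2

theorem eq_geometricHistory_of_mulVec_eq_smul {μ : ℂ} (hμ : μ ≠ 0) {v : Fin (κ + 1) × Fin n → ℂ}
    (hv : delayedOp n ℓ κ M p δ *ᵥ v = μ • v) :
    v = geometricHistory κ μ (fun i => v (0, i)) := by
  ext ⟨s, i⟩
  induction s using Fin.induction with
  | zero => simp [geometricHistory]
  | succ t ih =>
    have hshift : v (t.castSucc, i) = μ * v (t.succ, i) := by
      simpa [delayedOp_mulVec_succ] using congrFun hv (t.succ, i)
    rw [show v (t.succ, i) = μ⁻¹ * v (t.castSucc, i) by rw [hshift, inv_mul_cancel_left₀ hμ], ih]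
    simp [geometricHistory, pow_succ', mul_assoc]

theorem delayedOp_mulVec_geometricHistory_eq_smul_iff (hκ : ∀ i j, δ i j ≤ κ) {μ : ℂ}
    (hμ : μ ≠ 0) (u : Fin n → ℂ) :
    delayedOp n ℓ κ M p δ *ᵥ geometricHistory κ μ u = μ • geometricHistory κ μ u ↔
      delayWeighted M p δ μ *ᵥ u = μ • u := by
  have hzero : ∀ i, (delayedOp n ℓ κ M p δ *ᵥ geometricHistory κ μ u) (0, i) =
      (delayWeighted M p δ μ *ᵥ u) i := by
    intro i
    rw [delayedOp_mulVec_zero hκ]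
    simp [geometricHistory, delayWeighted, mulVec, dotProduct, mul_assoc]
  constructor
  · intro h
    ext i
    simpa [hzero, geometricHistory] using congrFun h (0, i)
  · intro h
    ext ⟨s, i⟩
    induction s using Fin.cases with
    | zero => simp [hzero, h, geometricHistory]
    | succ t =>
      simp [delayedOp_mulVec_succ, geometricHistory, pow_succ', ← mul_assoc, hμ]

theorem mem_spectrum_delayedOp_iff (hκ : ∀ i j, δ i j ≤ κ) {μ : ℂ} (hμ : μ ≠ 0) :
    μ ∈ spectrum ℂ (delayedOp n ℓ κ M p δ) ↔ μ ∈ spectrum ℂ (delayWeighted M p δ μ) := by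
  simp only [Matrix.mem_spectrum_iff_exists_mulVec_eq_smul]
  constructor
  · rintro ⟨v, hv0, hv⟩
    rw [eq_geometricHistory_of_mulVec_eq_smul hμ hv] at hv0 hv
    refine ⟨_, fun hu => hv0 ?_, (delayedOp_mulVec_geometricHistory_eq_smul_iff hκ hμ _).1 hv⟩
    rw [hu]
    ext
    simp [geometricHistory]
  · rintro ⟨u, hu0, hu⟩
    refine ⟨geometricHistory κ μ u, fun h => hu0 ?_,
      (delayedOp_mulVec_geometricHistory_eq_smul_iff hκ hμ u).2 hu⟩
    ext i
    simpa [geometricHistory] using congrFun h (0, i)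

end

theorem delayed_spectrum_indep_history_general (n ℓ κ κ' : ℕ) (M : Matrix (Fin n) (Fin n) ℝ)
    (p : Fin n → Fin ℓ) (δ : Fin ℓ → Fin ℓ → ℕ)
    (hκ : ∀ i j, δ i j ≤ κ) (hκκ' : κ ≤ κ') :
    (∀ μ : ℂ, μ ≠ 0 →
      (μ ∈ spectrum ℂ (delayedOp n ℓ κ M p δ) ↔ μ ∈ spectrum ℂ (delayedOp n ℓ κ' M p δ))) ∧
    (0 < specRad (delayedOp n ℓ κ M p δ) →
      specRad (delayedOp n ℓ κ M p δ) = specRad (delayedOp n ℓ κ' M p δ)) := by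
  have hiff : ∀ μ : ℂ, μ ≠ 0 →
      (μ ∈ spectrum ℂ (delayedOp n ℓ κ M p δ) ↔ μ ∈ spectrum ℂ (delayedOp n ℓ κ' M p δ)) :=
    fun μ hμ => by
      rw [mem_spectrum_delayedOp_iff hκ hμ,
        mem_spectrum_delayedOp_iff (fun i j => (hκ i j).trans hκκ') hμ]
  exact ⟨hiff, fun _ => specRad_eq_of_forall_ne_zero_mem_iff hiff⟩

/-- The nonzero spectrum of the delayed operator is independent of the history length:
for max delta <= k <= k', the operators share nonzero eigenvalues, hence the same
spectral radius whenever it is positive. -/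
theorem delayed_spectrum_indep_history (n ℓ κ κ' : ℕ) (M : Matrix (Fin n) (Fin n) ℝ)
    (p : Fin n → Fin ℓ) (δ : Fin ℓ → Fin ℓ → ℕ)
    (hδ0 : ∀ i, δ i i = 0) (hκ : ∀ i j, δ i j ≤ κ) (hκκ' : κ ≤ κ') :
    (∀ μ : ℂ, μ ≠ 0 →
      (μ ∈ spectrum ℂ (delayedOp n ℓ κ M p δ) ↔ μ ∈ spectrum ℂ (delayedOp n ℓ κ' M p δ))) ∧
    (0 < specRad (delayedOp n ℓ κ M p δ) →
      specRad (delayedOp n ℓ κ M p δ) = specRad (delayedOp n ℓ κ' M p δ)) :=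
  delayed_spectrum_indep_history_general n ℓ κ κ' M p δ hκ hκκ'
end

section
/- Let M be an n×n real matrix with 0 < ρ(M) < 1, partitioned into blocks, and let δ be a delay matrix with all delays on nonzero blocks equal to k ≥ 1. Then ρ(M) < ρ(M^{(δ)}) < 1; that is, the uniformly delayed iteration still converges, but strictly slower than the synchronous iteration. -/
/-!
A nonzero `μ` is an eigenvalue of the delayed operator exactly when `μ ^ (k + 1)` is an
eigenvalue of `M`: the rows of the operator below the first merely shift the history, so an
eigenvector is forced to be the geometric history `(w, μ⁻¹ w, μ⁻² w, …)`, and then the first row,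
which reads every block `k` steps back, says `M w = μ ^ (k + 1) w`. Hence
`ρ(M^(δ)) ^ (k + 1) = ρ(M)`, and `x ↦ x ^ (k + 1)` is strictly below the identity on `(0, 1)`.
-/

open Matrix

section SpectralRadius

variable {m : Type*} [Fintype m] [DecidableEq m]

theorem specRad_nonneg (A : Matrix m m ℂ) : 0 ≤ specRad A :=
  Real.sSup_nonneg fun _ ⟨z, _, hz⟩ => hz ▸ norm_nonneg z

theorem norm_le_specRad {A : Matrix m m ℂ} {z : ℂ} (hz : z ∈ spectrum ℂ A) : ‖z‖ ≤ specRad A :=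
  le_csSup ((Matrix.finite_spectrum A).image _).bddAbove ⟨z, hz, rfl⟩

theorem exists_mem_spectrum_norm_eq_specRad {A : Matrix m m ℂ} (h : 0 < specRad A) :
    ∃ z ∈ spectrum ℂ A, ‖z‖ = specRad A := by
  have hne : ((fun z : ℂ => ‖z‖) '' spectrum ℂ A).Nonempty := by
    by_contra hempty
    rw [Set.not_nonempty_iff_eq_empty] at hempty
    simp [specRad, hempty] at h
  exact hne.csSup_mem ((Matrix.finite_spectrum A).image _)

theorem specRad_pow_eq_of_mem_spectrum_iff {m' : Type*} [Fintype m'] [DecidableEq m']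
    {A : Matrix m m ℂ} {B : Matrix m' m' ℂ} {d : ℕ} (hd : d ≠ 0)
    (hAB : ∀ z ≠ 0, z ∈ spectrum ℂ B ↔ z ^ d ∈ spectrum ℂ A) (hA : 0 < specRad A) :
    specRad B ^ d = specRad A := by
  obtain ⟨μ, hμA, hμ⟩ := exists_mem_spectrum_norm_eq_specRad hA
  have hμ0 : μ ≠ 0 := by rintro rfl; simp [← hμ] at hA
  obtain ⟨z, rfl⟩ := IsAlgClosed.exists_pow_nat_eq μ (Nat.pos_of_ne_zero hd)
  have hz0 : z ≠ 0 := fun h => hμ0 (by simp [h, hd])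
  have hAB' : specRad A ≤ specRad B ^ d := by
    rw [← hμ, norm_pow]
    exact pow_le_pow_left₀ (norm_nonneg z) (norm_le_specRad ((hAB z hz0).mpr hμA)) d
  have hB : 0 < specRad B :=
    lt_of_pow_lt_pow_left₀ d (specRad_nonneg B) (by rw [zero_pow hd]; exact hA.trans_le hAB')
  obtain ⟨ν, hνB, hν⟩ := exists_mem_spectrum_norm_eq_specRad hB
  have hν0 : ν ≠ 0 := by rintro rfl; simp [← hν] at hB
  refine le_antisymm ?_ hAB'
  rw [← hν, ← norm_pow]
  exact norm_le_specRad ((hAB ν hν0).mp hνB)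

end SpectralRadius

namespace delayedOp

variable {n ℓ κ k : ℕ} {M : Matrix (Fin n) (Fin n) ℝ} {p : Fin n → Fin ℓ} {δ : Fin ℓ → Fin ℓ → ℕ}

theorem mulVec_succ (v : Fin (κ + 1) × Fin n → ℂ) (s : Fin κ) (i : Fin n) :
    (delayedOp n ℓ κ M p δ *ᵥ v) (s.succ, i) = v (s.castSucc, i) := by
  rw [mulVec, dotProduct, Finset.sum_eq_single (s.castSucc, i)]
  · simp [delayedOp]
  · rintro ⟨t, j⟩ - hne
    simp [delayedOp]
    rintro ht rfl
    exact (hne (Prod.ext (Fin.ext ht) rfl)).elim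
  · simp

theorem mulVec_zero (hunif : ∀ a b : Fin n, M a b ≠ 0 → δ (p b) (p a) = k) (hκ : k ≤ κ)
    (v : Fin (κ + 1) × Fin n → ℂ) (i : Fin n) :
    (delayedOp n ℓ κ M p δ *ᵥ v) (0, i) =
      (M.map Complex.ofReal *ᵥ fun j => v (⟨k, Nat.lt_succ_of_le hκ⟩, j)) i := by
  rw [mulVec, dotProduct, Fintype.sum_prod_type_right]
  refine Finset.sum_congr rfl fun j _ => ?_
  by_cases hij : M i j = 0
  · simp [delayedOp, hij]
  · rw [Finset.sum_eq_single ⟨k, Nat.lt_succ_of_le hκ⟩]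
    · simp [delayedOp, hunif i j hij]
    · intro t _ ht
      have : (t : ℕ) ≠ δ (p j) (p i) := hunif i j hij ▸ fun h => ht (Fin.ext h)
      simp [delayedOp, this]
    · simp

def geomHistory (c : ℂ) (w : Fin n → ℂ) : Fin (κ + 1) × Fin n → ℂ :=
  fun x => c ^ (x.1 : ℕ) * w x.2

theorem eq_geomHistory_of_mulVec_eq_smul {μ : ℂ} (hμ : μ ≠ 0) {v : Fin (κ + 1) × Fin n → ℂ}
    (hv : delayedOp n ℓ κ M p δ *ᵥ v = μ • v) : v = geomHistory μ⁻¹ fun j => v (0, j) := by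
  funext ⟨s, i⟩
  induction s using Fin.induction with
  | zero => simp [geomHistory]
  | succ s ih =>
    have hshift := congrFun hv (s.succ, i)
    rw [mulVec_succ, Pi.smul_apply, smul_eq_mul] at hshift
    simp only [geomHistory, Fin.val_succ, Fin.val_castSucc] at ih ⊢
    rw [pow_succ', mul_assoc, ← ih, hshift, inv_mul_cancel_left₀ hμ]

theorem mulVec_geomHistory_zero (hunif : ∀ a b : Fin n, M a b ≠ 0 → δ (p b) (p a) = k)
    (hκ : k ≤ κ) (c : ℂ) (w : Fin n → ℂ) (i : Fin n) :
    (delayedOp n ℓ κ M p δ *ᵥ geomHistory c w) (0, i) = c ^ k * (M.map Complex.ofReal *ᵥ w) i := by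
  rw [mulVec_zero hunif hκ]
  simp only [geomHistory]
  rw [← smul_eq_mul, ← Pi.smul_apply, ← mulVec_smul]
  rfl

theorem mulVec_geomHistory_eq_smul_iff (hunif : ∀ a b : Fin n, M a b ≠ 0 → δ (p b) (p a) = k)
    (hκ : k ≤ κ) {μ : ℂ} (hμ : μ ≠ 0) (w : Fin n → ℂ) :
    delayedOp n ℓ κ M p δ *ᵥ geomHistory μ⁻¹ w = μ • geomHistory μ⁻¹ w ↔
      M.map Complex.ofReal *ᵥ w = μ ^ (k + 1) • w := by
  have hrow0 : ∀ i, (delayedOp n ℓ κ M p δ *ᵥ geomHistory μ⁻¹ w) (0, i) =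
      (μ • geomHistory (κ := κ) μ⁻¹ w) (0, i) ↔
        (M.map Complex.ofReal *ᵥ w) i = (μ ^ (k + 1) • w) i := by
    intro i
    rw [mulVec_geomHistory_zero hunif hκ]
    simp only [geomHistory, Pi.smul_apply, smul_eq_mul, Fin.val_zero, pow_zero, one_mul, inv_pow]
    rw [inv_mul_eq_iff_eq_mul₀ (pow_ne_zero _ hμ), pow_succ, mul_assoc]
  constructor
  · intro h
    funext i
    exact (hrow0 i).mp (congrFun h (0, i))
  · intro h
    funext ⟨s, i⟩
    induction s using Fin.cases with
    | zero => exact (hrow0 i).mpr (congrFun h i)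
    | succ s =>
      rw [mulVec_succ]
      simp only [geomHistory, Pi.smul_apply, smul_eq_mul, Fin.val_succ, Fin.val_castSucc]
      rw [pow_succ, ← mul_assoc, mul_comm μ, mul_assoc, mul_assoc, inv_mul_cancel_left₀ hμ]

theorem mem_spectrum_iff (hunif : ∀ a b : Fin n, M a b ≠ 0 → δ (p b) (p a) = k)
    (hκ : k ≤ κ) {μ : ℂ} (hμ : μ ≠ 0) :
    μ ∈ spectrum ℂ (delayedOp n ℓ κ M p δ) ↔ μ ^ (k + 1) ∈ spectrum ℂ (M.map Complex.ofReal) := by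
  simp only [Matrix.mem_spectrum_iff_exists_mulVec_eq_smul]
  constructor
  · rintro ⟨v, hv0, hv⟩
    have hvg := eq_geomHistory_of_mulVec_eq_smul hμ hv
    refine ⟨fun j => v (0, j), fun h => hv0 ?_, ?_⟩
    · rw [hvg, h]
      funext x
      simp [geomHistory]
    · rw [hvg] at hv
      exact (mulVec_geomHistory_eq_smul_iff hunif hκ hμ _).mp hv
  · rintro ⟨w, hw0, hw⟩
    refine ⟨geomHistory μ⁻¹ w, fun h => hw0 ?_,
      (mulVec_geomHistory_eq_smul_iff hunif hκ hμ w).mpr hw⟩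
    funext j
    simpa [geomHistory] using congrFun h (0, j)

end delayedOp

theorem uniform_delay_price_general (n ℓ κ k : ℕ) (M : Matrix (Fin n) (Fin n) ℝ)
    (p : Fin n → Fin ℓ) (δ : Fin ℓ → Fin ℓ → ℕ)
    (hunif : ∀ a b : Fin n, M a b ≠ 0 → δ (p b) (p a) = k)
    (hk : 1 ≤ k) (hκ : k ≤ κ)
    (hρ0 : 0 < specRad (M.map (Complex.ofReal)))
    (hρ1 : specRad (M.map (Complex.ofReal)) < 1) :
    specRad (M.map (Complex.ofReal)) < specRad (delayedOp n ℓ κ M p δ) ∧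
      specRad (delayedOp n ℓ κ M p δ) < 1 := by
  set r := specRad (M.map Complex.ofReal)
  set ρ := specRad (delayedOp n ℓ κ M p δ)
  have hpow : ρ ^ (k + 1) = r :=
    specRad_pow_eq_of_mem_spectrum_iff k.succ_ne_zero
      (fun _ hz => delayedOp.mem_spectrum_iff hunif hκ hz) hρ0
  have hρ_lt_one : ρ < 1 := by
    by_contra! h
    exact hρ1.not_ge (hpow ▸ one_le_pow₀ h)
  have hρ_pos : 0 < ρ :=
    lt_of_pow_lt_pow_left₀ (k + 1) (specRad_nonneg _) (by rwa [hpow, zero_pow k.succ_ne_zero])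
  exact ⟨hpow ▸ pow_lt_self_of_lt_one₀ hρ_pos hρ_lt_one (by omega), hρ_lt_one⟩

/-- Price of asynchrony: with 0 < rho(M) < 1 and uniform delay k >= 1 on nonzero blocks,
rho(M) < rho(delayed) < 1. -/
theorem uniform_delay_price (n ℓ κ k : ℕ) (M : Matrix (Fin n) (Fin n) ℝ)
    (p : Fin n → Fin ℓ) (δ : Fin ℓ → Fin ℓ → ℕ)
    (hδ0 : ∀ i, δ i i = 0)
    (hunif : ∀ a b : Fin n, M a b ≠ 0 → δ (p b) (p a) = k)
    (hk : 1 ≤ k) (hκ : k ≤ κ) (hκδ : ∀ i j, δ i j ≤ κ)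
    (hρ0 : 0 < specRad (M.map (Complex.ofReal)))
    (hρ1 : specRad (M.map (Complex.ofReal)) < 1) :
    specRad (M.map (Complex.ofReal)) < specRad (delayedOp n ℓ κ M p δ) ∧
      specRad (delayedOp n ℓ κ M p δ) < 1 :=
  uniform_delay_price_general n ℓ κ k M p δ hunif hk hκ hρ0 hρ1
end
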